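/- arXiv:1006.1485 — 4 statements merged into one kernel-verified Lean document; each statement's English description precedes it below -/
import Mathlib

section
/- Assume d ≥ 1 and 2 + 4/d < p + 1 < 2*. Then the variational values satisfy N₃ = (d(p−1)/(2(p+1))) · N₂, where N₂ = inf { ‖f‖_{L²}^{p+1−d(p−1)/2} ‖∇f‖_{L²}^{d(p−1)/2 − 2} : f ∈ H¹(ℝᵈ)\{0}, 𝒦(f) ≤ 0 } and N₃ = inf { ‖f‖_{L²}^{p+1−d(p−1)/2} ‖∇f‖_{L²}^{d(p−1)/2} / ‖f‖_{L^{p+1}}^{p+1} : f ∈ H¹(ℝᵈ)\{0} }. -/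
open MeasureTheory Filter Set
open scoped ENNReal Topology

noncomputable section

abbrev Euc (d : ℕ) := EuclideanSpace ℝ (Fin d)

/-- `‖∇f‖_{L²}²`. -/
def gradSq (d : ℕ) (f : Euc d → ℂ) : ℝ := ∫ x, ‖fderiv ℝ f x‖ ^ 2

/-- `‖f‖_{L^q}^q`. -/
def ppow (d : ℕ) (q : ℝ) (f : Euc d → ℂ) : ℝ := ∫ x, ‖f x‖ ^ q

/-- `‖f‖_{L²}`. -/
def l2norm (d : ℕ) (f : Euc d → ℂ) : ℝ := Real.sqrt (ppow d 2 f)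

/-- Membership in `H¹(ℝᵈ)`, modelled with classical derivatives. -/
def InH1 (d : ℕ) (f : Euc d → ℂ) : Prop :=
  MemLp f 2 (volume : Measure (Euc d)) ∧ Differentiable ℝ f ∧
    Integrable (fun x => ‖fderiv ℝ f x‖ ^ 2) (volume : Measure (Euc d))

/-- `𝒦(f) = ‖∇f‖² − (d(p−1)/(2(p+1)))‖f‖_{p+1}^{p+1}`. -/
def Kfun (d : ℕ) (p : ℝ) (f : Euc d → ℂ) : ℝ :=
  gradSq d f - ((d : ℝ) * (p - 1) / (2 * (p + 1))) * ppow d (p + 1) f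

/-- Admissible (nonzero `H¹`) functions. -/
def Adm (d : ℕ) (p : ℝ) (f : Euc d → ℂ) : Prop :=
  InH1 d f ∧ MemLp f (ENNReal.ofReal (p + 1)) (volume : Measure (Euc d)) ∧
    ¬ (f =ᵐ[(volume : Measure (Euc d))] (0 : Euc d → ℂ))

/-- `𝒩₂(f) = ‖f‖_{L²}^{p+1−d(p−1)/2} ‖∇f‖_{L²}^{d(p−1)/2−2}`. -/
def N2fun (d : ℕ) (p : ℝ) (f : Euc d → ℂ) : ℝ :=
  l2norm d f ^ (p + 1 - (d : ℝ) * (p - 1) / 2) *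
    Real.sqrt (gradSq d f) ^ ((d : ℝ) * (p - 1) / 2 - 2)

/-- `𝓘(f) = ‖f‖_{L²}^{p+1−d(p−1)/2} ‖∇f‖_{L²}^{d(p−1)/2} / ‖f‖_{L^{p+1}}^{p+1}`. -/
def Ifun (d : ℕ) (p : ℝ) (f : Euc d → ℂ) : ℝ :=
  l2norm d f ^ (p + 1 - (d : ℝ) * (p - 1) / 2) *
    Real.sqrt (gradSq d f) ^ ((d : ℝ) * (p - 1) / 2) / ppow d (p + 1) f

/-- `N₂ = inf { 𝒩₂(f) : f ∈ H¹\{0}, 𝒦(f) ≤ 0 }`. -/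
def N2val (d : ℕ) (p : ℝ) : ℝ :=
  sInf {r : ℝ | ∃ f : Euc d → ℂ, Adm d p f ∧ Kfun d p f ≤ 0 ∧ r = N2fun d p f}

/-- `N₃ = inf { 𝓘(f) : f ∈ H¹\{0} }`. -/
def N3val (d : ℕ) (p : ℝ) : ℝ :=
  sInf {r : ℝ | ∃ f : Euc d → ℂ, Adm d p f ∧ r = Ifun d p f}

/-!
`𝓘` is invariant under `f ↦ c f` for `c > 0`, whereas
`𝒦(c f) = c² ‖∇f‖² − κ c^{p+1} ‖f‖_{p+1}^{p+1}` with `κ = d(p−1)/(2(p+1))`, so every `f` with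
`∇f ≠ 0` can be rescaled onto `{𝒦 = 0}` without changing `𝓘`. Moreover
`𝓘(f) = 𝒩₂(f) ‖∇f‖² / ‖f‖_{p+1}^{p+1}`, hence `𝓘 ≤ κ 𝒩₂` on `{𝒦 ≤ 0}` with equality on `{𝒦 = 0}`.
The two infima therefore differ exactly by the factor `κ`.
-/

def virialCoeff (d : ℕ) (p : ℝ) : ℝ := (d : ℝ) * (p - 1) / (2 * (p + 1))

section

variable {d : ℕ} {p : ℝ} {f : Euc d → ℂ}

lemma Kfun_eq (d : ℕ) (p : ℝ) (f : Euc d → ℂ) :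
    Kfun d p f = gradSq d f - virialCoeff d p * ppow d (p + 1) f := rfl

lemma ppow_nonneg (d : ℕ) (q : ℝ) (f : Euc d → ℂ) : 0 ≤ ppow d q f :=
  integral_nonneg fun _ => Real.rpow_nonneg (norm_nonneg _) _

lemma gradSq_nonneg (d : ℕ) (f : Euc d → ℂ) : 0 ≤ gradSq d f :=
  integral_nonneg fun _ => sq_nonneg _

lemma N2fun_nonneg (d : ℕ) (p : ℝ) (f : Euc d → ℂ) : 0 ≤ N2fun d p f :=
  mul_nonneg (Real.rpow_nonneg (Real.sqrt_nonneg _) _) (Real.rpow_nonneg (Real.sqrt_nonneg _) _)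

lemma Ifun_nonneg (d : ℕ) (p : ℝ) (f : Euc d → ℂ) : 0 ≤ Ifun d p f :=
  div_nonneg (mul_nonneg (Real.rpow_nonneg (Real.sqrt_nonneg _) _)
    (Real.rpow_nonneg (Real.sqrt_nonneg _) _)) (ppow_nonneg d (p + 1) f)

lemma ppow_pos {q : ℝ} (hq : 0 < q) (hf : MemLp f (ENNReal.ofReal q) volume)
    (hne : ¬ f =ᵐ[volume] 0) : 0 < ppow d q f := by
  have hint : Integrable (fun x => ‖f x‖ ^ q) volume := by
    simpa [ENNReal.toReal_ofReal hq.le] using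
      hf.integrable_norm_rpow (by simp [hq]) (by simp)
  refine (ppow_nonneg d q f).lt_of_ne fun h => hne ?_
  filter_upwards [(integral_eq_zero_iff_of_nonneg (fun _ => by positivity) hint).1 h.symm]
    with x hx
  simpa [Real.rpow_eq_zero (norm_nonneg _) hq.ne'] using hx

lemma Adm.ppow_pos (hp : -1 < p) (hf : Adm d p f) : 0 < ppow d (p + 1) f :=
  _root_.ppow_pos (by linarith) hf.2.1 hf.2.2

lemma ppow_const_mul {c : ℝ} (hc : 0 ≤ c) (q : ℝ) (f : Euc d → ℂ) :
    ppow d q (fun x => (c : ℂ) * f x) = c ^ q * ppow d q f := by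
  rw [ppow, ppow, ← integral_const_mul]
  congr 1 with x
  rw [norm_mul, Complex.norm_real, Real.norm_of_nonneg hc, Real.mul_rpow hc (norm_nonneg _)]

lemma norm_fderiv_const_mul (c : ℝ) (hf : Differentiable ℝ f) (x : Euc d) :
    ‖fderiv ℝ (fun y => (c : ℂ) * f y) x‖ = |c| * ‖fderiv ℝ f x‖ := by
  rw [fderiv_const_mul (hf x), show (c : ℂ) • fderiv ℝ f x = c • fderiv ℝ f x by
    ext; simp [Complex.real_smul], norm_smul, Real.norm_eq_abs]

lemma gradSq_const_mul (c : ℝ) (hf : Differentiable ℝ f) :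
    gradSq d (fun x => (c : ℂ) * f x) = c ^ 2 * gradSq d f := by
  rw [gradSq, gradSq, ← integral_const_mul]
  congr 1 with x
  rw [norm_fderiv_const_mul c hf, mul_pow, sq_abs]

lemma Adm.const_mul {c : ℝ} (hc : c ≠ 0) (hf : Adm d p f) :
    Adm d p (fun x => (c : ℂ) * f x) := by
  obtain ⟨⟨hL2, hdiff, hgrad⟩, hLp, hne⟩ := hf
  refine ⟨⟨hL2.const_mul _, hdiff.const_mul _, ?_⟩, hLp.const_mul _, fun h => hne ?_⟩
  · simpa only [norm_fderiv_const_mul c hdiff, mul_pow] using hgrad.const_mul (|c| ^ 2)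
  · filter_upwards [h] with x hx
    simpa [hc] using hx

lemma l2norm_const_mul {c : ℝ} (hc : 0 ≤ c) (f : Euc d → ℂ) :
    l2norm d (fun x => (c : ℂ) * f x) = c * l2norm d f := by
  rw [l2norm, l2norm, ppow_const_mul hc, Real.rpow_two, Real.sqrt_mul (by positivity),
    Real.sqrt_sq hc]

lemma sqrt_gradSq_const_mul {c : ℝ} (hc : 0 ≤ c) (hf : Differentiable ℝ f) :
    √(gradSq d (fun x => (c : ℂ) * f x)) = c * √(gradSq d f) := by
  rw [gradSq_const_mul c hf, Real.sqrt_mul (by positivity), Real.sqrt_sq hc]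

lemma Ifun_const_mul {c : ℝ} (hc : 0 < c) (hf : Differentiable ℝ f) :
    Ifun d p (fun x => (c : ℂ) * f x) = Ifun d p f := by
  have hcp : c ^ (p + 1 - (d : ℝ) * (p - 1) / 2) * c ^ ((d : ℝ) * (p - 1) / 2) = c ^ (p + 1) := by
    rw [← Real.rpow_add hc, sub_add_cancel]
  rw [Ifun, Ifun, l2norm_const_mul hc.le, sqrt_gradSq_const_mul hc.le hf, ppow_const_mul hc.le,
    Real.mul_rpow hc.le (show 0 ≤ l2norm d f from Real.sqrt_nonneg _),
    Real.mul_rpow hc.le (Real.sqrt_nonneg _),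
    mul_mul_mul_comm, hcp, mul_div_mul_left _ _ (Real.rpow_pos_of_pos hc _).ne']

lemma exists_Kfun_const_mul_eq_zero (hp : p ≠ 1) (hκ : 0 < virialCoeff d p)
    (hf : Differentiable ℝ f) (hG : 0 < gradSq d f) (hP : 0 < ppow d (p + 1) f) :
    ∃ c : ℝ, 0 < c ∧ Kfun d p (fun x => (c : ℂ) * f x) = 0 := by
  set X := gradSq d f / (virialCoeff d p * ppow d (p + 1) f)
  have hX : 0 < X := by positivity
  -- `c = X^{1/(p−1)}` balances `c² ‖∇f‖²` against `κ c^{p+1} ‖f‖_{p+1}^{p+1}`.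
  refine ⟨X ^ (p - 1)⁻¹, by positivity, ?_⟩
  have hsplit : (X ^ (p - 1)⁻¹) ^ (p + 1) = (X ^ (p - 1)⁻¹) ^ 2 * X := by
    rw [← Real.rpow_natCast, ← Real.rpow_mul hX.le, ← Real.rpow_mul hX.le,
      ← Real.rpow_add_one hX.ne']
    congr 1
    field_simp [sub_ne_zero.mpr hp]
    push_cast; ring
  rw [Kfun_eq, gradSq_const_mul _ hf, ppow_const_mul (by positivity), hsplit]
  simp only [X]
  field_simp
  ring

lemma one_lt_of_two_lt_mul_sub_one_div_two (hm : 2 < (d : ℝ) * (p - 1) / 2) : 1 < p := by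
  by_contra! h
  nlinarith [(Nat.cast_nonneg d : (0 : ℝ) ≤ d)]

lemma virialCoeff_pos (hm : 2 < (d : ℝ) * (p - 1) / 2) : 0 < virialCoeff d p :=
  div_pos (by linarith) (by linarith [one_lt_of_two_lt_mul_sub_one_div_two hm])

lemma Ifun_eq_N2fun_mul (hm : (d : ℝ) * (p - 1) / 2 ≠ 0) :
    Ifun d p f = N2fun d p f * gradSq d f / ppow d (p + 1) f := by
  have hsplit := Real.rpow_add' (Real.sqrt_nonneg (gradSq d f))
    (y := (d : ℝ) * (p - 1) / 2 - 2) (z := 2) (by rwa [sub_add_cancel])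
  rw [sub_add_cancel, Real.rpow_two, Real.sq_sqrt (gradSq_nonneg d f)] at hsplit
  rw [Ifun, N2fun, hsplit, mul_assoc]

lemma Ifun_le_of_Kfun_nonpos (hm : (d : ℝ) * (p - 1) / 2 ≠ 0) (hP : 0 < ppow d (p + 1) f)
    (hK : Kfun d p f ≤ 0) : Ifun d p f ≤ virialCoeff d p * N2fun d p f := by
  have hG : gradSq d f ≤ virialCoeff d p * ppow d (p + 1) f := by rw [Kfun_eq] at hK; linarith
  rw [Ifun_eq_N2fun_mul hm, div_le_iff₀ hP, mul_comm (virialCoeff d p), mul_assoc]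
  exact mul_le_mul_of_nonneg_left hG (N2fun_nonneg d p f)

lemma Ifun_eq_of_Kfun_eq_zero (hm : (d : ℝ) * (p - 1) / 2 ≠ 0) (hP : 0 < ppow d (p + 1) f)
    (hK : Kfun d p f = 0) : Ifun d p f = virialCoeff d p * N2fun d p f := by
  rw [Ifun_eq_N2fun_mul hm, show gradSq d f = virialCoeff d p * ppow d (p + 1) f by
    rw [Kfun_eq] at hK; linarith]
  field_simp

lemma N2fun_eq_zero_of_gradSq_eq_zero (hm : (d : ℝ) * (p - 1) / 2 ≠ 2) (hG : gradSq d f = 0) :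
    N2fun d p f = 0 := by
  rw [N2fun, hG, Real.sqrt_zero, Real.zero_rpow (sub_ne_zero.mpr hm), mul_zero]

/-- `g` is a rescaling of `f` onto `{𝒦 = 0}`, or `f` itself when `∇f = 0`. -/
lemma Adm.exists_Kfun_nonpos (hm : 2 < (d : ℝ) * (p - 1) / 2) (hf : Adm d p f) :
    ∃ g, Adm d p g ∧ Kfun d p g ≤ 0 ∧ virialCoeff d p * N2fun d p g ≤ Ifun d p f := by
  have hp := one_lt_of_two_lt_mul_sub_one_div_two hm
  have hκ := virialCoeff_pos hm
  have hP := hf.ppow_pos (by linarith)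
  rcases (gradSq_nonneg d f).lt_or_eq with hG | hG
  · obtain ⟨c, hc, hK⟩ := exists_Kfun_const_mul_eq_zero hp.ne' hκ hf.1.2.1 hG hP
    have hg := hf.const_mul hc.ne'
    refine ⟨_, hg, hK.le, ?_⟩
    rw [← Ifun_eq_of_Kfun_eq_zero (by linarith) (hg.ppow_pos (by linarith)) hK,
      Ifun_const_mul hc hf.1.2.1]
  · refine ⟨f, hf, by rw [Kfun_eq, ← hG]; nlinarith, ?_⟩
    rw [N2fun_eq_zero_of_gradSq_eq_zero hm.ne' hG.symm, mul_zero]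
    exact Ifun_nonneg d p f

end

theorem N3_eq_N2_general (d : ℕ) (p : ℝ) (hd : 1 ≤ d)
    (hp1 : 2 + 4 / (d : ℝ) < p + 1) :
    N3val d p = ((d : ℝ) * (p - 1) / (2 * (p + 1))) * N2val d p := by
  have hd0 : (0 : ℝ) < d := by exact_mod_cast hd
  have hm : 2 < (d : ℝ) * (p - 1) / 2 := by
    have : 4 < (p - 1) * d := (div_lt_iff₀ hd0).1 (by linarith)
    linarith
  have hp := one_lt_of_two_lt_mul_sub_one_div_two hm
  rw [N3val, N2val, ← virialCoeff, ← smul_eq_mul,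
    ← Real.sInf_smul_of_nonneg (virialCoeff_pos hm).le]
  apply csInf_eq_csInf_of_forall_exists_le
  · rintro _ ⟨f, hf, rfl⟩
    obtain ⟨g, hg, hK, hle⟩ := hf.exists_Kfun_nonpos hm
    exact ⟨_, ⟨_, ⟨g, hg, hK, rfl⟩, rfl⟩, hle⟩
  · rintro _ ⟨_, ⟨f, hf, hK, rfl⟩, rfl⟩
    exact ⟨_, ⟨f, hf, rfl⟩, Ifun_le_of_Kfun_nonpos (by linarith) (hf.ppow_pos (by linarith)) hK⟩

/-- `N₃ = (d(p−1)/(2(p+1))) · N₂`. -/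
theorem N3_eq_N2 (d : ℕ) (p : ℝ) (hd : 1 ≤ d)
    (hp1 : 2 + 4 / (d : ℝ) < p + 1)
    (hp2 : 3 ≤ d → p + 1 < 2 * (d : ℝ) / ((d : ℝ) - 2)) :
    N3val d p = ((d : ℝ) * (p - 1) / (2 * (p + 1))) * N2val d p :=
  N3_eq_N2_general d p hd hp1
end
end

section
/- Let 0 < q < ∞, L ∈ ℕ, and a₁, …, a_L ∈ ℂ. Then there exists a constant C depending only on q and L such that | |Σ_{k=1}^L a_k|^q Σ_{l=1}^L a_l − Σ_{l=1}^L |a_l|^q a_l | ≤ C Σ_{l=1}^L Σ_{k≠l} |a_l| |a_k|^q. -/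
/-!
Write `S = ∑ k, a k` and `d l = ∑ k ≠ l, ‖a k‖`. The left-hand side is
`‖∑ l, (‖S‖^q - ‖a l‖^q) a l‖`, and `|‖S‖ - ‖a l‖| ≤ d l`. The scalar estimate
`y |x^q - y^q| ≤ C_q (y d^q + d y^q)` for `|x - y| ≤ d` (subadditivity of `t ↦ t^q` when
`q ≤ 1`, Bernoulli's inequality when `q ≥ 1`) reduces everything to the terms `‖a l‖ (d l)^q`
and `d l ‖a l‖^q`. The first is bounded via `(∑ c)^q ≤ n^q ∑ c^q`; the second is the
right-hand side with `k` and `l` exchanged.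
-/

open Finset

namespace Real

lemma abs_rpow_sub_rpow_le_abs_sub_rpow {x y q : ℝ} (hx : 0 ≤ x) (hy : 0 ≤ y) (hq₀ : 0 ≤ q)
    (hq₁ : q ≤ 1) : |x ^ q - y ^ q| ≤ |x - y| ^ q := by
  wlog hyx : y ≤ x generalizing x y
  · rw [abs_sub_comm, abs_sub_comm x]
    exact this hy hx (le_of_not_ge hyx)
  have hmono : y ^ q ≤ x ^ q := rpow_le_rpow hy hyx hq₀
  have hsubadd : x ^ q ≤ y ^ q + (x - y) ^ q := by
    simpa using rpow_add_le_add_rpow hy (sub_nonneg.2 hyx) hq₀ hq₁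
  rw [abs_of_nonneg (sub_nonneg.2 hmono), abs_of_nonneg (sub_nonneg.2 hyx)]
  linarith

lemma rpow_sub_rpow_le_mul_rpow_sub_one_mul {s t q : ℝ} (hs : 0 ≤ s) (hst : s ≤ t) (hq : 1 ≤ q) :
    t ^ q - s ^ q ≤ q * t ^ (q - 1) * (t - s) := by
  rcases (hs.trans hst).eq_or_lt with rfl | ht
  · obtain rfl : s = 0 := le_antisymm hst hs
    simp
  have bernoulli : 1 + q * (s / t - 1) ≤ (s / t) ^ q := by
    simpa using one_add_mul_self_le_rpow_one_add (s := s / t - 1)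
      (by linarith [div_nonneg hs ht.le]) hq
  rw [div_rpow hs ht.le, le_div_iff₀ (rpow_pos_of_pos ht q)] at bernoulli
  have htq : t ^ q = t * t ^ (q - 1) := by
    rw [← rpow_one_add' ht.le (by linarith)]
    ring_nf
  have : (1 + q * (s / t - 1)) * t ^ q = t ^ q - q * t ^ (q - 1) * (t - s) := by
    rw [htq]
    field_simp
    ring
  linarith

lemma abs_rpow_sub_rpow_le_mul_max_rpow_mul_abs {x y q : ℝ} (hx : 0 ≤ x) (hy : 0 ≤ y)
    (hq : 1 ≤ q) : |x ^ q - y ^ q| ≤ q * max x y ^ (q - 1) * |x - y| := by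
  wlog hyx : y ≤ x generalizing x y
  · rw [abs_sub_comm, abs_sub_comm x, max_comm]
    exact this hy hx (le_of_not_ge hyx)
  rw [abs_of_nonneg (sub_nonneg.2 (rpow_le_rpow hy hyx (by linarith))),
    abs_of_nonneg (sub_nonneg.2 hyx), max_eq_left hyx]
  exact rpow_sub_rpow_le_mul_rpow_sub_one_mul hy hyx hq

lemma mul_mul_add_rpow_sub_one_le {y d q : ℝ} (hy : 0 ≤ y) (hd : 0 ≤ d) (hq : 1 ≤ q) :
    y * d * (y + d) ^ (q - 1) ≤ 2 ^ (q - 1) * (y * d ^ q + d * y ^ q) := by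
  wlog hdy : d ≤ y generalizing y d
  · have := this hd hy (le_of_not_ge hdy)
    rw [mul_comm y, add_comm y]
    linarith
  have hle : (y + d) ^ (q - 1) ≤ 2 ^ (q - 1) * y ^ (q - 1) := by
    rw [← mul_rpow zero_le_two hy]
    exact rpow_le_rpow (by positivity) (by linarith) (by linarith)
  have hyq : y * y ^ (q - 1) = y ^ q := by
    rw [← rpow_one_add' hy (by linarith)]
    ring_nf
  calc y * d * (y + d) ^ (q - 1) ≤ y * d * (2 ^ (q - 1) * y ^ (q - 1)) := by gcongr
    _ = 2 ^ (q - 1) * (d * y ^ q) := by rw [← hyq]; ring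
    _ ≤ 2 ^ (q - 1) * (y * d ^ q + d * y ^ q) := by
        gcongr
        linarith [show 0 ≤ y * d ^ q by positivity]

lemma mul_abs_rpow_sub_rpow_le {x y d q : ℝ} (hq : 0 ≤ q) (hx : 0 ≤ x) (hy : 0 ≤ y)
    (hd : |x - y| ≤ d) :
    y * |x ^ q - y ^ q| ≤ max 1 (q * 2 ^ (q - 1)) * (y * d ^ q + d * y ^ q) := by
  have hd₀ : 0 ≤ d := (abs_nonneg _).trans hd
  rcases le_total q 1 with hq₁ | hq₁
  · calc y * |x ^ q - y ^ q| ≤ y * d ^ q := by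
          gcongr
          exact (abs_rpow_sub_rpow_le_abs_sub_rpow hx hy hq hq₁).trans
            (rpow_le_rpow (abs_nonneg _) hd hq)
      _ ≤ 1 * (y * d ^ q + d * y ^ q) := by
          linarith [show 0 ≤ d * y ^ q by positivity]
      _ ≤ _ := by gcongr; exact le_max_left _ _
  · have hmax : max x y ≤ y + d := max_le (by linarith [le_abs_self (x - y)]) (by linarith)
    calc y * |x ^ q - y ^ q| ≤ y * (q * max x y ^ (q - 1) * d) := by
          gcongr
          exact (abs_rpow_sub_rpow_le_mul_max_rpow_mul_abs hx hy hq₁).trans (by gcongr)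
      _ ≤ q * (y * d * (y + d) ^ (q - 1)) := by
          rw [show y * (q * max x y ^ (q - 1) * d) = q * (y * d * max x y ^ (q - 1)) by ring]
          gcongr
      _ ≤ q * (2 ^ (q - 1) * (y * d ^ q + d * y ^ q)) :=
          mul_le_mul_of_nonneg_left (mul_mul_add_rpow_sub_one_le hy hd₀ hq₁) hq
      _ ≤ _ := by rw [← mul_assoc]; gcongr; exact le_max_right _ _

end Real

namespace Finset

lemma rpow_sum_le_card_rpow_mul_sum_rpow {ι : Type*} (s : Finset ι) {f : ι → ℝ}
    (hf : ∀ i ∈ s, 0 ≤ f i) {q : ℝ} (hq : 0 < q) :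
    (∑ i ∈ s, f i) ^ q ≤ (#s : ℝ) ^ q * ∑ i ∈ s, f i ^ q := by
  rcases s.eq_empty_or_nonempty with rfl | hs
  · simp [Real.zero_rpow hq.ne']
  obtain ⟨j, hj, hmax⟩ := s.exists_max_image f hs
  calc (∑ i ∈ s, f i) ^ q ≤ (#s * f j) ^ q := by
        gcongr
        · exact sum_nonneg hf
        · simpa using sum_le_card_nsmul s f (f j) hmax
    _ = (#s : ℝ) ^ q * f j ^ q := Real.mul_rpow (Nat.cast_nonneg _) (hf j hj)
    _ ≤ (#s : ℝ) ^ q * ∑ i ∈ s, f i ^ q := by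
        gcongr
        exact single_le_sum (fun i hi => Real.rpow_nonneg (hf i hi) q) hj

lemma sum_sum_erase_comm {ι M : Type*} [DecidableEq ι] [AddCommGroup M] (s : Finset ι)
    (f : ι → ι → M) :
    ∑ i ∈ s, ∑ j ∈ s.erase i, f i j = ∑ i ∈ s, ∑ j ∈ s.erase i, f j i := by
  have hdiag : ∀ g : ι → ι → M, ∑ i ∈ s, ∑ j ∈ s.erase i, g i j
      = ∑ i ∈ s, ∑ j ∈ s, g i j - ∑ i ∈ s, g i i := fun g => by
    rw [← sum_sub_distrib]
    exact sum_congr rfl fun i hi => sum_erase_eq_sub hi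
  rw [hdiag, hdiag, sum_comm]

end Finset

section

variable {ι : Type*} [Fintype ι] [DecidableEq ι]

lemma sum_mul_rpow_sum_erase_add_sum_erase_mul_rpow_le {y : ι → ℝ} (hy : ∀ i, 0 ≤ y i) {q : ℝ}
    (hq : 0 < q) :
    ∑ l, (y l * (∑ k ∈ univ.erase l, y k) ^ q + (∑ k ∈ univ.erase l, y k) * y l ^ q)
      ≤ ((Fintype.card ι : ℝ) ^ q + 1) * ∑ l, ∑ k ∈ univ.erase l, y l * y k ^ q := by
  rw [sum_add_distrib, add_mul, one_mul]
  gcongr ?_ + ?_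
  · rw [mul_sum]
    refine sum_le_sum fun l _ => ?_
    have hcard : (#(univ.erase l) : ℝ) ≤ Fintype.card ι := by
      exact_mod_cast (card_erase_le).trans (card_univ (α := ι)).le
    calc y l * (∑ k ∈ univ.erase l, y k) ^ q
        ≤ y l * ((#(univ.erase l) : ℝ) ^ q * ∑ k ∈ univ.erase l, y k ^ q) :=
          mul_le_mul_of_nonneg_left
            (rpow_sum_le_card_rpow_mul_sum_rpow _ (fun k _ => hy k) hq) (hy l)
      _ ≤ y l * ((Fintype.card ι : ℝ) ^ q * ∑ k ∈ univ.erase l, y k ^ q) := by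
          have := hy l
          have := sum_nonneg fun k (_ : k ∈ univ.erase l) => Real.rpow_nonneg (hy k) q
          gcongr
      _ = (Fintype.card ι : ℝ) ^ q * ∑ k ∈ univ.erase l, y l * y k ^ q := by
          rw [mul_sum, mul_sum, mul_sum]
          exact sum_congr rfl fun k _ => by ring
  · simp_rw [sum_mul]
    exact (sum_sum_erase_comm _ fun l k => y k * y l ^ q).le

variable {E : Type*} [SeminormedAddCommGroup E] [NormedSpace ℝ E]

lemma norm_rpow_smul_sum_sub_sum_rpow_smul_le {q : ℝ} (hq : 0 ≤ q) (a : ι → E) :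
    ‖‖∑ k, a k‖ ^ q • ∑ l, a l - ∑ l, ‖a l‖ ^ q • a l‖
      ≤ max 1 (q * 2 ^ (q - 1)) * ∑ l, (‖a l‖ * (∑ k ∈ univ.erase l, ‖a k‖) ^ q
          + (∑ k ∈ univ.erase l, ‖a k‖) * ‖a l‖ ^ q) := by
  have hdist (l : ι) : |‖∑ k, a k‖ - ‖a l‖| ≤ ∑ k ∈ univ.erase l, ‖a k‖ :=
    calc |‖∑ k, a k‖ - ‖a l‖| ≤ ‖∑ k, a k - a l‖ := abs_norm_sub_norm_le _ _
      _ = ‖∑ k ∈ univ.erase l, a k‖ := by rw [sum_erase_eq_sub (mem_univ l)]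
      _ ≤ _ := norm_sum_le _ _
  rw [smul_sum, ← sum_sub_distrib, mul_sum]
  refine (norm_sum_le _ _).trans (sum_le_sum fun l _ => ?_)
  rw [← sub_smul, norm_smul, Real.norm_eq_abs, mul_comm]
  exact Real.mul_abs_rpow_sub_rpow_le hq (norm_nonneg _) (norm_nonneg _) (hdist l)

end

/-- for `0 < q < ∞`, `L ∈ ℕ` and complex numbers `a₁, …, a_L`, there is a
constant `C` depending only on `q` and `L` with
`| |Σ a_k|^q Σ a_l − Σ |a_l|^q a_l | ≤ C Σ_l Σ_{k≠l} |a_l| |a_k|^q`. -/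
theorem decoupling_inequality (q : ℝ) (hq : 0 < q) (L : ℕ) :
    ∃ C : ℝ, 0 < C ∧ ∀ a : Fin L → ℂ,
      ‖((‖∑ k, a k‖ ^ q : ℝ) : ℂ) * (∑ l, a l) - ∑ l, ((‖a l‖ ^ q : ℝ) : ℂ) * a l‖
        ≤ C * ∑ l, ∑ k ∈ Finset.univ.erase l, ‖a l‖ * ‖a k‖ ^ q := by
  refine ⟨max 1 (q * 2 ^ (q - 1)) * ((L : ℝ) ^ q + 1), by positivity, fun a => ?_⟩
  have hsplit := norm_rpow_smul_sum_sub_sum_rpow_smul_le hq.le a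
  simp only [Complex.real_smul] at hsplit
  refine hsplit.trans ?_
  rw [mul_assoc]
  gcongr
  simpa using sum_mul_rpow_sum_erase_add_sum_erase_mul_rpow_le (fun l => norm_nonneg (a l)) hq
end

section
/- Let 1 < α < β < γ < ∞ and let f be a measurable function on ℝᵈ with ‖f‖_{L^α}^α ≤ C_α, ‖f‖_{L^β}^β ≥ C_β, ‖f‖_{L^γ}^γ ≤ C_γ for positive constants C_α, C_β, C_γ. Then for every η with 0 < η < min{1, (C_β/(4C_α))^{1/(β−α)}, (C_β/(4C_γ))^{1/(γ−β)}}, the Lebesgue measure of the super-level set satisfies ℒᵈ({x : |f(x)| > η}) > (C_β/2) η^{β}. -/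
open MeasureTheory
open scoped ENNReal

noncomputable section

/-! Pointwise, `x ^ β` is dominated by `s ^ (β - α) x ^ α` where `x ≤ s`, by `s ^ (γ - β) x ^ γ`
where `x ≥ s⁻¹`, and by `s⁻¹ ^ β` in between. Integrating, `∫ |f| ^ β` is bounded by
`η ^ (β - α) C_α + η ^ (γ - β) C_γ + η⁻¹ ^ β ℒᵈ {|f| > η}`; the choice of `η` makes the first
two terms smaller than `C_β / 4` each, so the last one must exceed `C_β / 2`. -/

namespace ENNReal

variable {x s : ℝ≥0∞} {α β γ : ℝ}

lemma rpow_le_mul_rpow_of_le (hα : 0 ≤ α) (hαβ : α ≤ β) (hxs : x ≤ s) :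
    x ^ β ≤ s ^ (β - α) * x ^ α := by
  calc x ^ β = x ^ (β - α) * x ^ α := by
        rw [← rpow_add_of_nonneg _ _ (sub_nonneg.2 hαβ) hα, sub_add_cancel]
    _ ≤ s ^ (β - α) * x ^ α := by gcongr

lemma rpow_le_mul_rpow_of_one_le_mul (hβ : 0 ≤ β) (hβγ : β ≤ γ) (hsx : 1 ≤ s * x) :
    x ^ β ≤ s ^ (γ - β) * x ^ γ := by
  have hγβ : 0 ≤ γ - β := sub_nonneg.2 hβγ
  calc x ^ β = 1 ^ (γ - β) * x ^ β := by rw [one_rpow, one_mul]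
    _ ≤ (s * x) ^ (γ - β) * x ^ β := by gcongr
    _ = s ^ (γ - β) * x ^ γ := by
        rw [mul_rpow_of_nonneg _ _ hγβ, mul_assoc, ← rpow_add_of_nonneg _ _ hγβ hβ,
          sub_add_cancel]

lemma rpow_le_inv_rpow_of_mul_le_one (hβ : 0 ≤ β) (hsx : s * x ≤ 1) : x ^ β ≤ s⁻¹ ^ β := by
  gcongr
  rwa [le_inv_iff_mul_le, mul_comm]

lemma rpow_le_add_add_indicator (hα : 0 ≤ α) (hαβ : α ≤ β) (hβγ : β ≤ γ) :
    x ^ β ≤ s ^ (β - α) * x ^ α + s ^ (γ - β) * x ^ γ +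
      (Set.Ioi s).indicator (fun _ ↦ s⁻¹ ^ β) x := by
  rcases le_or_gt x s with hxs | hsx
  · exact le_add_right (le_add_right (rpow_le_mul_rpow_of_le hα hαβ hxs))
  rcases le_total (s * x) 1 with hsx_le | hsx_ge
  · rw [Set.indicator_of_mem (Set.mem_Ioi.2 hsx)]
    exact le_add_left (rpow_le_inv_rpow_of_mul_le_one (hα.trans hαβ) hsx_le)
  · exact le_add_right (le_add_left
      (rpow_le_mul_rpow_of_one_le_mul (hα.trans hαβ) hβγ hsx_ge))

end ENNReal

lemma lintegral_rpow_le_add_measure_lt {X : Type*} [MeasurableSpace X] {μ : Measure X}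
    {g : X → ℝ≥0∞} (hg : Measurable g) (s : ℝ≥0∞) {α β γ : ℝ}
    (hα : 0 ≤ α) (hαβ : α ≤ β) (hβγ : β ≤ γ) :
    ∫⁻ x, g x ^ β ∂μ ≤ s ^ (β - α) * ∫⁻ x, g x ^ α ∂μ + s ^ (γ - β) * ∫⁻ x, g x ^ γ ∂μ +
      s⁻¹ ^ β * μ {x | s < g x} := by
  calc ∫⁻ x, g x ^ β ∂μ
      ≤ ∫⁻ x, s ^ (β - α) * g x ^ α + s ^ (γ - β) * g x ^ γ +
          (Set.Ioi s).indicator (fun _ ↦ s⁻¹ ^ β) (g x) ∂μ :=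
        lintegral_mono fun x ↦ ENNReal.rpow_le_add_add_indicator hα hαβ hβγ
    _ = _ := by
        rw [lintegral_add_left (by fun_prop), lintegral_add_left (by fun_prop),
          lintegral_const_mul _ (by fun_prop), lintegral_const_mul _ (by fun_prop),
          lintegral_indicator_const_comp hg measurableSet_Ioi]
        rfl

lemma rpow_mul_lt_of_lt_rpow_one_div {η p C D : ℝ} (hη : 0 ≤ η) (hp : 0 < p) (hC : 0 < C)
    (hD : 0 ≤ D) (h : η < (D / C) ^ (1 / p)) : η ^ p * C < D := by
  rwa [one_div, Real.lt_rpow_inv_iff_of_pos hη (by positivity) hp, lt_div_iff₀ hC] at h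

lemma ofReal_mul_rpow_lt_measure_lt {X : Type*} [MeasurableSpace X] {μ : Measure X}
    {g : X → ℝ≥0∞} (hg : Measurable g) {α β γ η A B G : ℝ}
    (hα : 0 ≤ α) (hαβ : α ≤ β) (hβγ : β ≤ γ) (hη : 0 < η) (hA : 0 ≤ A) (hG : 0 ≤ G)
    (hgα : ∫⁻ x, g x ^ α ∂μ ≤ ENNReal.ofReal A) (hgβ : ENNReal.ofReal B ≤ ∫⁻ x, g x ^ β ∂μ)
    (hgγ : ∫⁻ x, g x ^ γ ∂μ ≤ ENNReal.ofReal G)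
    (hηα : η ^ (β - α) * A < B / 4) (hηγ : η ^ (γ - β) * G < B / 4) :
    ENNReal.ofReal (B / 2 * η ^ β) < μ {x | ENNReal.ofReal η < g x} := by
  have hB : 0 < B := by
    have := (mul_nonneg (Real.rpow_nonneg hη.le (β - α)) hA).trans_lt hηα
    linarith
  by_contra! hμ
  have hB_le : ENNReal.ofReal B ≤
      ENNReal.ofReal (η ^ (β - α) * A + η ^ (γ - β) * G + η⁻¹ ^ β * (B / 2 * η ^ β)) := by
    calc ENNReal.ofReal B
        ≤ ENNReal.ofReal η ^ (β - α) * (∫⁻ x, g x ^ α ∂μ) +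
            ENNReal.ofReal η ^ (γ - β) * (∫⁻ x, g x ^ γ ∂μ) +
            (ENNReal.ofReal η)⁻¹ ^ β * μ {x | ENNReal.ofReal η < g x} :=
          hgβ.trans (lintegral_rpow_le_add_measure_lt hg _ hα hαβ hβγ)
      _ ≤ ENNReal.ofReal η ^ (β - α) * ENNReal.ofReal A +
            ENNReal.ofReal η ^ (γ - β) * ENNReal.ofReal G +
            ENNReal.ofReal η⁻¹ ^ β * ENNReal.ofReal (B / 2 * η ^ β) := by
          rw [ENNReal.ofReal_inv_of_pos hη]
          gcongr
      _ = _ := by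
          rw [ENNReal.ofReal_rpow_of_nonneg hη.le (by linarith),
            ENNReal.ofReal_rpow_of_nonneg hη.le (by linarith),
            ENNReal.ofReal_rpow_of_nonneg (by positivity) (by linarith),
            ← ENNReal.ofReal_mul (by positivity), ← ENNReal.ofReal_mul (by positivity),
            ← ENNReal.ofReal_mul (by positivity), ← ENNReal.ofReal_add (by positivity)
              (by positivity), ← ENNReal.ofReal_add (by positivity) (by positivity)]
  have hη_cancel : η⁻¹ ^ β * (B / 2 * η ^ β) = B / 2 := by
    rw [Real.inv_rpow hη.le]
    field_simp
  rw [hη_cancel, ENNReal.ofReal_le_ofReal_iff (by positivity)] at hB_le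
  linarith

/-- if `1 < α < β < γ < ∞` and a measurable `f` on `ℝᵈ` satisfies
`∫|f|^α ≤ C_α`, `∫|f|^β ≥ C_β`, `∫|f|^γ ≤ C_γ`, then for every
`0 < η < min{1, (C_β/(4C_α))^{1/(β−α)}, (C_β/(4C_γ))^{1/(γ−β)}}` one has
`ℒᵈ({|f| > η}) > (C_β/2) η^β`. -/
theorem level_set_lower_bound (d : ℕ) (α β γ : ℝ)
    (hα : 1 < α) (hαβ : α < β) (hβγ : β < γ)
    (f : Euc d → ℂ) (hf : Measurable f)
    (Cα Cβ Cγ : ℝ) (hCα : 0 < Cα) (hCβ : 0 < Cβ) (hCγ : 0 < Cγ)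
    (h1 : ∫⁻ x, (‖f x‖₊ : ℝ≥0∞) ^ α ≤ ENNReal.ofReal Cα)
    (h2 : ENNReal.ofReal Cβ ≤ ∫⁻ x, (‖f x‖₊ : ℝ≥0∞) ^ β)
    (h3 : ∫⁻ x, (‖f x‖₊ : ℝ≥0∞) ^ γ ≤ ENNReal.ofReal Cγ)
    (η : ℝ) (hη0 : 0 < η)
    (hη : η < min 1 (min ((Cβ / (4 * Cα)) ^ ((1 : ℝ) / (β - α)))
        ((Cβ / (4 * Cγ)) ^ ((1 : ℝ) / (γ - β))))) :
    ENNReal.ofReal (Cβ / 2 * η ^ β) < volume {x : Euc d | η < ‖f x‖} := by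
  have hsmall_α : η ^ (β - α) * Cα < Cβ / 4 :=
    rpow_mul_lt_of_lt_rpow_one_div hη0.le (by linarith) hCα (by positivity)
      (by rw [div_div]; exact hη.trans_le ((min_le_right _ _).trans (min_le_left _ _)))
  have hsmall_γ : η ^ (γ - β) * Cγ < Cβ / 4 :=
    rpow_mul_lt_of_lt_rpow_one_div hη0.le (by linarith) hCγ (by positivity)
      (by rw [div_div]; exact hη.trans_le ((min_le_right _ _).trans (min_le_right _ _)))
  have hlevel : {x : Euc d | ENNReal.ofReal η < ‖f x‖ₑ} = {x : Euc d | η < ‖f x‖} := by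
    ext x
    rw [Set.mem_ofPred_eq, Set.mem_ofPred_eq, ← ofReal_norm,
      ENNReal.ofReal_lt_ofReal_iff_of_nonneg hη0.le]
  simp only [← enorm_eq_nnnorm] at h1 h2 h3
  rw [← hlevel]
  exact ofReal_mul_rpow_lt_measure_lt hf.enorm (by linarith) hαβ.le hβγ.le hη0 hCα.le hCγ.le
    h1 h2 h3 hsmall_α hsmall_γ
end
end

section
/- Let 0 < q < ∞ and let (f_n) be a uniformly bounded sequence in L^q(ℝᵈ) with f_n → f almost everywhere for some f ∈ L^q(ℝᵈ). Then lim_{n→∞} ∫_{ℝᵈ} | |f_n|^q − |f_n − f|^q − |f|^q | dx = 0. -/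
/-!
For every `δ > 0` the elementary inequality `(a + b) ^ q ≤ (1 + ε) * a ^ q + K_ε * b ^ q` gives
the pointwise bound `| |fₙ|^q - |fₙ - f|^q - |f|^q | ≤ δ |fₙ - f|^q + C_δ |f|^q`. Subtracting
`δ |fₙ - f|^q` leaves a positive part dominated by `C_δ |f|^q` and tending to `0` a.e., so by
dominated convergence the integrals are eventually at most `δ · supₙ ∫ |fₙ - f|^q + o(1)`, and the
supremum is finite because `(fₙ)` is bounded in `L^q`.
-/

open MeasureTheory Filter
open scoped ENNReal Topology

noncomputable section

lemma add_rpow_le_mul_rpow_add_mul_rpow {q η a b : ℝ} (hq : 0 ≤ q) (hη : 0 < η)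
    (ha : 0 ≤ a) (hb : 0 ≤ b) :
    (a + b) ^ q ≤ (1 + η) ^ q * a ^ q + (1 + η⁻¹) ^ q * b ^ q := by
  have hmax : a + b ≤ max ((1 + η) * a) ((1 + η⁻¹) * b) := by
    rcases le_or_gt b (η * a) with h | h
    · exact le_max_of_le_left (by nlinarith)
    · refine le_max_of_le_right ?_
      have : a ≤ η⁻¹ * b := by rw [inv_mul_eq_div, le_div_iff₀ hη]; linarith
      linarith
  refine (Real.rpow_le_rpow (by positivity) hmax hq).trans ?_
  rcases max_cases ((1 + η) * a) ((1 + η⁻¹) * b) with ⟨heq, _⟩ | ⟨heq, _⟩ <;>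
    rw [heq, Real.mul_rpow (by positivity) (by assumption)]
  · exact le_add_of_nonneg_right (by positivity)
  · exact le_add_of_nonneg_left (by positivity)

lemma exists_add_rpow_le_one_add_mul_rpow_add {q ε : ℝ} (hq : 0 < q) (hε : 0 < ε) :
    ∃ K : ℝ, 0 ≤ K ∧ ∀ a b : ℝ, 0 ≤ a → 0 ≤ b → (a + b) ^ q ≤ (1 + ε) * a ^ q + K * b ^ q := by
  set η := (1 + ε) ^ q⁻¹ - 1
  have hη : 0 < η := by
    have : 1 < (1 + ε) ^ q⁻¹ := Real.one_lt_rpow (by linarith) (inv_pos.2 hq)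
    linarith
  have hpow : (1 + η) ^ q = 1 + ε := by
    rw [add_sub_cancel, Real.rpow_inv_rpow (by linarith) hq.ne']
  refine ⟨(1 + η⁻¹) ^ q, by positivity, fun a b ha hb => ?_⟩
  simpa only [hpow] using add_rpow_le_mul_rpow_add_mul_rpow hq.le hη ha hb

lemma exists_abs_norm_rpow_sub_sub_le {E : Type*} [SeminormedAddCommGroup E] {q δ : ℝ}
    (hq : 0 < q) (hδ : 0 < δ) :
    ∃ C : ℝ, ∀ a b : E,
      |‖a‖ ^ q - ‖a - b‖ ^ q - ‖b‖ ^ q| ≤ δ * ‖a - b‖ ^ q + C * ‖b‖ ^ q := by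
  set ε := min (δ / 2) 1
  have hε : 0 < ε := by positivity
  obtain ⟨K, hK, hadd⟩ := exists_add_rpow_le_one_add_mul_rpow_add hq hε
  refine ⟨2 * K + 1, fun a b => ?_⟩
  have hA : ‖a‖ ^ q ≤ (1 + ε) * ‖a - b‖ ^ q + K * ‖b‖ ^ q := by
    refine le_trans ?_ (hadd _ _ (norm_nonneg _) (norm_nonneg _))
    exact Real.rpow_le_rpow (norm_nonneg _) (norm_le_norm_sub_add a b) hq.le
  have hS : ‖a - b‖ ^ q ≤ (1 + ε) * ‖a‖ ^ q + K * ‖b‖ ^ q := by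
    refine le_trans ?_ (hadd _ _ (norm_nonneg _) (norm_nonneg _))
    exact Real.rpow_le_rpow (norm_nonneg _) (norm_sub_le a b) hq.le
  have hεδ : ε ≤ δ / 2 := min_le_left _ _
  have hε1 : ε ≤ 1 := min_le_right _ _
  have hSq : 0 ≤ ‖a - b‖ ^ q := by positivity
  have hBq : 0 ≤ ‖b‖ ^ q := by positivity
  rw [abs_le]
  constructor
  · nlinarith [mul_le_mul_of_nonneg_left hA hε.le, mul_le_mul_of_nonneg_right hε1 hSq,
      mul_le_mul_of_nonneg_right hε1 (mul_nonneg hK hBq)]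
  · nlinarith

lemma tendsto_abs_norm_rpow_sub_sub {ι E : Type*} [SeminormedAddCommGroup E] {l : Filter ι}
    {q : ℝ} (hq : 0 < q) {a : ι → E} {b : E} (h : Tendsto a l (𝓝 b)) :
    Tendsto (fun i => |‖a i‖ ^ q - ‖a i - b‖ ^ q - ‖b‖ ^ q|) l (𝓝 0) := by
  have hcont : Continuous fun y : E => |‖y‖ ^ q - ‖y - b‖ ^ q - ‖b‖ ^ q| := by
    have := Real.continuous_rpow_const hq.le
    fun_prop
  simpa [Function.comp_def, Real.zero_rpow hq.ne'] using (hcont.tendsto b).comp h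

namespace MeasureTheory

variable {α : Type*} [MeasurableSpace α] {μ : Measure α}

lemma MemLp.integrable_norm_rpow_ofReal {E : Type*} [NormedAddCommGroup E] {f : α → E} {q : ℝ}
    (hq : 0 < q) (hf : MemLp f (ENNReal.ofReal q) μ) : Integrable (fun x => ‖f x‖ ^ q) μ := by
  simpa [ENNReal.toReal_ofReal hq.le] using
    hf.integrable_norm_rpow (by simpa using hq) ENNReal.ofReal_ne_top

lemma integral_norm_rpow_le_of_eLpNorm_le {E : Type*} [NormedAddCommGroup E] {f : α → E}
    {q C : ℝ} (hq : 0 < q) (hC : 0 ≤ C) (hf : AEStronglyMeasurable f μ)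
    (hfC : eLpNorm f (ENNReal.ofReal q) μ ≤ ENNReal.ofReal C) :
    ∫ x, ‖f x‖ ^ q ∂μ ≤ C ^ q := by
  have hint : 0 ≤ ∫ x, ‖f x‖ ^ q ∂μ := integral_nonneg fun x => by positivity
  have hlp : lpNorm f (ENNReal.ofReal q) μ = (∫ x, ‖f x‖ ^ q ∂μ) ^ q⁻¹ := by
    have := lpNorm_eq_integral_norm_rpow_toReal (by simpa using hq) ENNReal.ofReal_ne_top hf
    rwa [ENNReal.toReal_ofReal hq.le] at this
  have hlpC : lpNorm f (ENNReal.ofReal q) μ ≤ C := by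
    rw [← toReal_eLpNorm hf]
    exact ENNReal.toReal_le_of_le_ofReal hC hfC
  calc ∫ x, ‖f x‖ ^ q ∂μ = (lpNorm f (ENNReal.ofReal q) μ) ^ q := by
        rw [hlp, Real.rpow_inv_rpow hint hq.ne']
    _ ≤ C ^ q := Real.rpow_le_rpow lpNorm_nonneg hlpC hq.le

lemma exists_integral_norm_sub_rpow_le {E : Type*} [NormedAddCommGroup E] {f : ℕ → α → E}
    {g : α → E} {q : ℝ} (hq : 0 < q) (hf : ∀ n, AEStronglyMeasurable (f n) μ)
    (hg : MemLp g (ENNReal.ofReal q) μ)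
    (hbd : ∃ C : ℝ, ∀ n, eLpNorm (f n) (ENNReal.ofReal q) μ ≤ ENNReal.ofReal C) :
    ∃ M : ℝ, ∀ n, ∫ x, ‖f n x - g x‖ ^ q ∂μ ≤ M := by
  obtain ⟨C, hC⟩ := hbd
  let K := ENNReal.LpAddConst (ENNReal.ofReal q) *
    (ENNReal.ofReal C + eLpNorm g (ENNReal.ofReal q) μ)
  have hK : K ≠ ∞ := ENNReal.mul_ne_top (ENNReal.LpAddConst_lt_top _).ne
    (ENNReal.add_ne_top.2 ⟨ENNReal.ofReal_ne_top, hg.eLpNorm_ne_top⟩)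
  refine ⟨K.toReal ^ q, fun n => integral_norm_rpow_le_of_eLpNorm_le (f := f n - g) hq
    ENNReal.toReal_nonneg ((hf n).sub hg.aestronglyMeasurable) ?_⟩
  rw [ENNReal.ofReal_toReal hK]
  exact (eLpNorm_sub_le' (hf n) hg.aestronglyMeasurable _).trans
    (by dsimp only [K]; gcongr; exact hC n)

lemma tendsto_integral_max_sub_mul_zero {φ ψ : ℕ → α → ℝ} {G : α → ℝ} {δ : ℝ} (hδ : 0 ≤ δ)
    (hφ : ∀ n, Integrable (φ n) μ) (hψ : ∀ n, Integrable (ψ n) μ) (hψ0 : ∀ n x, 0 ≤ ψ n x)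
    (hG : Integrable G μ) (hle : ∀ n x, φ n x ≤ δ * ψ n x + G x)
    (hlim : ∀ᵐ x ∂μ, Tendsto (fun n => φ n x) atTop (𝓝 0)) :
    Tendsto (fun n => ∫ x, max (φ n x - δ * ψ n x) 0 ∂μ) atTop (𝓝 0) := by
  have hW : ∀ n, Integrable (fun x => max (φ n x - δ * ψ n x) 0) μ :=
    fun n => ((hφ n).sub ((hψ n).const_mul δ)).pos_part
  have hbound : ∀ n x, ‖max (φ n x - δ * ψ n x) 0‖ ≤ ‖G x‖ := fun n x => by
    rw [Real.norm_of_nonneg (le_max_right _ _), Real.norm_eq_abs]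
    exact max_le (by linarith [hle n x, le_abs_self (G x)]) (abs_nonneg _)
  have hlimW : ∀ᵐ x ∂μ, Tendsto (fun n => max (φ n x - δ * ψ n x) 0) atTop (𝓝 0) := by
    filter_upwards [hlim] with x hx
    have hmax : Tendsto (fun n => max (φ n x) 0) atTop (𝓝 0) := by
      simpa using hx.max (tendsto_const_nhds (x := (0 : ℝ)))
    refine tendsto_of_tendsto_of_tendsto_of_le_of_le tendsto_const_nhds hmax
      (fun n => le_max_right _ _) fun n => max_le_max_right _ ?_
    nlinarith [hψ0 n x]
  simpa using tendsto_integral_of_dominated_convergence (fun x => ‖G x‖)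
    (fun n => (hW n).aestronglyMeasurable) hG.norm
    (fun n => Eventually.of_forall (hbound n)) hlimW

lemma tendsto_integral_of_le_mul_add_integrable {φ ψ : ℕ → α → ℝ} {M : ℝ}
    (hφ : ∀ n, Integrable (φ n) μ) (hφ0 : ∀ n x, 0 ≤ φ n x)
    (hψ : ∀ n, Integrable (ψ n) μ) (hψ0 : ∀ n x, 0 ≤ ψ n x) (hψM : ∀ n, ∫ x, ψ n x ∂μ ≤ M)
    (hlim : ∀ᵐ x ∂μ, Tendsto (fun n => φ n x) atTop (𝓝 0))
    (hdom : ∀ δ > 0, ∃ G : α → ℝ, Integrable G μ ∧ ∀ n x, φ n x ≤ δ * ψ n x + G x) :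
    Tendsto (fun n => ∫ x, φ n x ∂μ) atTop (𝓝 0) := by
  refine tendsto_order.2 ⟨fun a ha => Eventually.of_forall fun n =>
    ha.trans_le (integral_nonneg (hφ0 n)), fun ε hε => ?_⟩
  obtain ⟨δ, hδ, hδM⟩ : ∃ δ > 0, δ * M < ε / 2 := by
    refine ⟨ε / (2 * (|M| + 1)), by positivity, ?_⟩
    rw [div_mul_eq_mul_div, div_lt_div_iff₀ (by positivity) two_pos]
    nlinarith [le_abs_self M]
  obtain ⟨G, hG, hle⟩ := hdom δ hδ
  have hW := tendsto_integral_max_sub_mul_zero hδ.le hφ hψ hψ0 hG hle hlim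
  filter_upwards [hW.eventually (gt_mem_nhds (half_pos hε))] with n hn
  have hWint : Integrable (fun x => max (φ n x - δ * ψ n x) 0) μ :=
    ((hφ n).sub ((hψ n).const_mul δ)).pos_part
  calc ∫ x, φ n x ∂μ ≤ ∫ x, (max (φ n x - δ * ψ n x) 0 + δ * ψ n x) ∂μ :=
        integral_mono (hφ n) (hWint.add ((hψ n).const_mul δ)) fun x => by
          linarith [le_max_left (φ n x - δ * ψ n x) 0]
    _ = ∫ x, max (φ n x - δ * ψ n x) 0 ∂μ + δ * ∫ x, ψ n x ∂μ := by
        rw [integral_add hWint ((hψ n).const_mul δ), integral_const_mul]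
    _ < ε / 2 + ε / 2 := by nlinarith [hψM n]
    _ = ε := add_halves ε

end MeasureTheory

/-- Brezis–Lieb lemma: if `0 < q < ∞`, `(f_n)` is uniformly bounded in
`L^q(ℝᵈ)` and `f_n → f` a.e. with `f ∈ L^q`, then
`∫ | |f_n|^q − |f_n − f|^q − |f|^q | dx → 0`. -/
theorem brezis_lieb (d : ℕ) (q : ℝ) (hq : 0 < q)
    (f : ℕ → Euc d → ℂ) (g : Euc d → ℂ)
    (hmem : ∀ n, MemLp (f n) (ENNReal.ofReal q) (volume : Measure (Euc d)))
    (hg : MemLp g (ENNReal.ofReal q) (volume : Measure (Euc d)))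
    (hbd : ∃ C : ℝ, ∀ n,
      eLpNorm (f n) (ENNReal.ofReal q) (volume : Measure (Euc d)) ≤ ENNReal.ofReal C)
    (hae : ∀ᵐ x ∂(volume : Measure (Euc d)), Tendsto (fun n => f n x) atTop (𝓝 (g x))) :
    Tendsto (fun n => ∫ x, |‖f n x‖ ^ q - ‖f n x - g x‖ ^ q - ‖g x‖ ^ q|)
      atTop (𝓝 0) := by
  have hfq n := (hmem n).integrable_norm_rpow_ofReal hq
  have hgq := hg.integrable_norm_rpow_ofReal hq
  have hsubq n := ((hmem n).sub hg).integrable_norm_rpow_ofReal hq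
  obtain ⟨M, hM⟩ :=
    exists_integral_norm_sub_rpow_le hq (fun n => (hmem n).aestronglyMeasurable) hg hbd
  refine tendsto_integral_of_le_mul_add_integrable (ψ := fun n x => ‖f n x - g x‖ ^ q)
    (fun n => (((hfq n).sub (hsubq n)).sub hgq).abs) (fun n x => abs_nonneg _) hsubq
    (fun n x => by positivity) hM ?_ fun δ hδ => ?_
  · filter_upwards [hae] with x hx using tendsto_abs_norm_rpow_sub_sub hq hx
  · obtain ⟨C, hC⟩ := exists_abs_norm_rpow_sub_sub_le (E := ℂ) hq hδ
    exact ⟨fun x => C * ‖g x‖ ^ q, hgq.const_mul C, fun n x => hC (f n x) (g x)⟩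
end
end
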